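/- arXiv:1204.1446 — 6 statements merged into one kernel-verified Lean document; each statement's English description precedes it below -/
import Mathlib

section
/- Let ν ∈ (0,1), h, λ > 0, let κ_{ν,h,λ}(θ) = h·log(λ/(λ+(−θ)^ν)) for θ ≤ 0 and ∞ for θ > 0, and let I^{(T)}_{ν,h,λ}(x) := sup_{θ∈ℝ} {θx − κ_{ν,h,λ}(θ)}. Then: I^{(T)}_{ν,h,λ}(x) = ∞ for x ≤ 0; I^{(T)}_{ν,h,λ} is (strictly) decreasing on (0,∞); lim_{x↓0} I^{(T)}_{ν,h,λ}(x) = ∞; lim_{x→∞} I^{(T)}_{ν,h,λ}(x) = 0; and I^{(T)}_{ν,h,λ} is not a good rate function, i.e. not all of its level sets {x ∈ ℝ : I^{(T)}_{ν,h,λ}(x) ≤ η}, η ≥ 0, are compact. -/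
open MeasureTheory Filter Real ProbabilityTheory
open scoped ENNReal NNReal

/-- Pochhammer symbol `(γ)_r = γ(γ+1)⋯(γ+r-1)`, with `(γ)_0 = 1`. -/
noncomputable def pochhammerReal (γ : ℝ) (r : ℕ) : ℝ := ∏ i ∈ Finset.range r, (γ + i)

/-- Generalized Mittag-Leffler function `E^γ_{α,β}(x) = Σ_r (γ)_r x^r / (r! Γ(αr+β))`. -/
noncomputable def genML (α β γ : ℝ) (x : ℝ) : ℝ :=
  ∑' r : ℕ, pochhammerReal γ r * x ^ r / (r.factorial * Real.Gamma (α * r + β))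

/-- Mittag-Leffler function `E_{ν,1}(x) = Σ_r x^r / Γ(νr+1)`. -/
noncomputable def ML (ν x : ℝ) : ℝ := ∑' r : ℕ, x ^ r / Real.Gamma (ν * r + 1)

/-- Generalized Mittag-Leffler density `f_{ν,h,λ}(t) = λ^h t^{νh-1} E^h_{ν,νh}(-λ t^ν)` for `t > 0`. -/
noncomputable def mlDensity (ν h lam : ℝ) (t : ℝ) : ℝ :=
  if 0 < t then lam ^ h * t ^ (ν * h - 1) * genML ν (ν * h) h (-(lam * t ^ ν)) else 0

/-- `log E[e^{θ X}]` as an extended real number. -/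
noncomputable def eCgf {Ω : Type*} [MeasurableSpace Ω] (P : Measure Ω) (X : Ω → ℝ)
    (θ : ℝ) : EReal :=
  ENNReal.log (∫⁻ ω, ENNReal.ofReal (Real.exp (θ * X ω)) ∂P)

/-- Legendre transform `κ*(x) = sup_θ {θ x - κ(θ)}` (extended-real valued). -/
noncomputable def legendre (κ : ℝ → EReal) (x : ℝ) : EReal :=
  ⨆ θ : ℝ, ((θ * x : ℝ) : EReal) - κ θ

/-- The large deviation principle for a family `{Z_t : t > 0}` of real random variables,
with rate function `I : ℝ → [0,∞]`. -/
def SatisfiesLDP {Ω : Type*} [MeasurableSpace Ω] (P : Measure Ω) (Z : ℝ → Ω → ℝ)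
    (I : ℝ → EReal) : Prop :=
  (∀ x, 0 ≤ I x) ∧ LowerSemicontinuous I ∧
  (∀ C : Set ℝ, IsClosed C →
    limsup (fun t : ℝ => ((1 / t : ℝ) : EReal) * ENNReal.log (P {ω | Z t ω ∈ C})) atTop
      ≤ - ⨅ x ∈ C, I x) ∧
  (∀ G : Set ℝ, IsOpen G →
    - ⨅ x ∈ G, I x
      ≤ liminf (fun t : ℝ => ((1 / t : ℝ) : EReal) * ENNReal.log (P {ω | Z t ω ∈ G})) atTop)

/-- The large deviation principle for a sequence `{Z_n : n ≥ 1}` of real random variables,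
with rate function `I : ℝ → [0,∞]`. -/
def SatisfiesLDPseq {Ω : Type*} [MeasurableSpace Ω] (P : Measure Ω) (Z : ℕ → Ω → ℝ)
    (I : ℝ → EReal) : Prop :=
  (∀ x, 0 ≤ I x) ∧ LowerSemicontinuous I ∧
  (∀ C : Set ℝ, IsClosed C →
    limsup (fun n : ℕ => ((1 / (n : ℝ) : ℝ) : EReal) * ENNReal.log (P {ω | Z n ω ∈ C})) atTop
      ≤ - ⨅ x ∈ C, I x) ∧
  (∀ G : Set ℝ, IsOpen G →
    - ⨅ x ∈ G, I x
      ≤ liminf (fun n : ℕ => ((1 / (n : ℝ) : ℝ) : EReal) * ENNReal.log (P {ω | Z n ω ∈ G})) atTop)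

/-- A rate function is good if all level sets `{x | I x ≤ η}`, `η ≥ 0`, are compact. -/
def GoodRate (I : ℝ → EReal) : Prop :=
  ∀ η : ℝ, 0 ≤ η → IsCompact {x : ℝ | I x ≤ (η : EReal)}


noncomputable def mlG (ν h lam x s : ℝ) : ℝ :=
  -(s*x) + h * (Real.log (lam + s ^ ν) - Real.log lam)


/-! Substituting `θ = -s`, the transform is `I(x) = sup_{s ≥ 0} (ψ(s) - s x)` with the Laplace
exponent `ψ(s) = h log (1 + s^ν / λ)`. As `ψ` is unbounded, `I = ∞` on `(-∞, 0]` and `I` blows up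
at `0+`. As `ν < 1`, `ψ(s)` is of order `s^ν`: it beats `s x` near `s = 0` and loses against it
near `s = ∞`, so for `x > 0` the supremum is attained at some `s > 0`, which makes `I` strictly
decreasing; the bound `ψ(s) ≤ (h / λ) s^ν` also gives `I(x) → 0`, so `{I ≤ 1}` contains a
half-line and is not compact. -/

open Set Topology

section RpowAsymptotics

variable {ν : ℝ}

lemma tendsto_rpow_nhdsGT_zero (hν : 0 < ν) : Tendsto (fun s : ℝ => s ^ ν) (𝓝[>] 0) (𝓝 0) := by
  simpa [zero_rpow hν.ne'] using
    (continuousAt_rpow_const 0 ν (Or.inr hν.le)).tendsto.mono_left nhdsWithin_le_nhds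

lemma eventually_mul_rpow_le_mul_atTop (hν : ν < 1) (c : ℝ) {y : ℝ} (hy : 0 < y) :
    ∀ᶠ s in atTop, c * s ^ ν ≤ s * y := by
  have hlim : Tendsto (fun s : ℝ => c * s ^ (ν - 1)) atTop (𝓝 0) := by
    simpa using (tendsto_rpow_neg_atTop (y := 1 - ν) (by linarith)).const_mul c
  filter_upwards [hlim.eventually (ge_mem_nhds hy), eventually_gt_atTop 0] with s hs hs0
  rw [rpow_sub_one hs0.ne', mul_div_assoc', div_le_iff₀ hs0] at hs
  linarith

lemma eventually_mul_lt_mul_rpow_nhdsGT_zero (hν : ν < 1) {c : ℝ} (hc : 0 < c) (y : ℝ) :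
    ∀ᶠ s in 𝓝[>] 0, s * y < c * s ^ ν := by
  have hlim : Tendsto (fun s : ℝ => c * s ^ (ν - 1)) (𝓝[>] 0) atTop :=
    (tendsto_rpow_neg_nhdsGT_zero (by linarith)).const_mul_atTop hc
  filter_upwards [hlim.eventually_gt_atTop y, self_mem_nhdsWithin] with s hs (hs0 : 0 < s)
  rw [rpow_sub_one hs0.ne', mul_div_assoc', lt_div_iff₀ hs0] at hs
  linarith

lemma eventually_forall_mul_rpow_sub_mul_le (hν₀ : 0 < ν) (hν₁ : ν < 1) {c : ℝ} (hc : 0 ≤ c)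
    {ε : ℝ} (hε : 0 < ε) : ∀ᶠ x in atTop, ∀ s, 0 ≤ s → c * s ^ ν - s * x ≤ ε := by
  obtain ⟨δ, hδε, hδ⟩ := (((tendsto_rpow_nhdsGT_zero hν₀).const_mul c).eventually
    (ge_mem_nhds (by simpa using hε))).and (self_mem_nhdsWithin (a := (0 : ℝ))) |>.exists
  filter_upwards [eventually_ge_atTop (c * δ ^ (ν - 1)), eventually_ge_atTop 0] with x hx hx0 s hs
  rcases le_total s δ with hsδ | hδs
  · have : c * s ^ ν ≤ c * δ ^ ν := by gcongr
    linarith [mul_nonneg hs hx0]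
  · have hs0 : 0 < s := lt_of_lt_of_le hδ hδs
    have : c * s ^ ν ≤ s * x :=
      calc c * s ^ ν = c * s ^ (ν - 1) * s := by rw [rpow_sub_one hs0.ne']; field_simp
        _ ≤ c * δ ^ (ν - 1) * s := mul_le_mul_of_nonneg_right
          (mul_le_mul_of_nonneg_left (rpow_le_rpow_of_nonpos hδ hδs (by linarith)) hc) hs
        _ ≤ s * x := by rw [mul_comm s]; gcongr
    linarith

end RpowAsymptotics

lemma le_legendre (κ : ℝ → EReal) (x θ : ℝ) : ((θ * x : ℝ) : EReal) - κ θ ≤ legendre κ x :=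
  le_iSup (fun θ : ℝ => ((θ * x : ℝ) : EReal) - κ θ) θ

lemma legendre_le {κ : ℝ → EReal} (hκ : ∀ θ, 0 < θ → κ θ = ⊤) {x : ℝ} {c : EReal}
    (h : ∀ θ ≤ 0, ((θ * x : ℝ) : EReal) - κ θ ≤ c) : legendre κ x ≤ c :=
  iSup_le fun θ => (le_or_gt θ 0).elim (h θ) fun hθ => by rw [hκ θ hθ, EReal.sub_top]; exact bot_le

lemma not_goodRate_of_tendsto_atTop_zero {I : ℝ → EReal} (hI : Tendsto I atTop (𝓝 0)) :
    ¬ GoodRate I := by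
  intro hgood
  obtain ⟨B, hB⟩ := (hgood 1 zero_le_one).bddAbove
  obtain ⟨x, hx, hBx⟩ := ((hI.eventually (gt_mem_nhds (by norm_num : (0 : EReal) < (1 : ℝ)))).and
    (eventually_gt_atTop B)).exists
  exact (hB (show I x ≤ ((1 : ℝ) : EReal) from hx.le)).not_gt hBx

noncomputable def mlLaplaceExponent (ν h lam s : ℝ) : ℝ := h * Real.log (1 + s ^ ν / lam)

noncomputable def mlCgf (ν h lam θ : ℝ) : EReal :=
  if θ ≤ 0 then ((h * Real.log (lam / (lam + (-θ) ^ ν)) : ℝ) : EReal) else ⊤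

section MittagLeffler

variable {ν h lam : ℝ}

lemma mlLaplaceExponent_zero (hν : ν ≠ 0) : mlLaplaceExponent ν h lam 0 = 0 := by
  simp [mlLaplaceExponent, zero_rpow hν]

lemma mlLaplaceExponent_le (hh : 0 ≤ h) (hlam : 0 < lam) {s : ℝ} (hs : 0 ≤ s) :
    mlLaplaceExponent ν h lam s ≤ h / lam * s ^ ν := by
  have hlog : Real.log (1 + s ^ ν / lam) ≤ s ^ ν / lam := by
    linarith [log_le_sub_one_of_pos (by positivity : 0 < 1 + s ^ ν / lam)]
  calc mlLaplaceExponent ν h lam s ≤ h * (s ^ ν / lam) := by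
        unfold mlLaplaceExponent; gcongr
    _ = h / lam * s ^ ν := by ring

lemma le_mlLaplaceExponent (hh : 0 ≤ h) (hlam : 0 < lam) {s : ℝ} (hs : 0 ≤ s)
    (hsν : s ^ ν ≤ 2 * lam) : h / (2 * lam) * s ^ ν ≤ mlLaplaceExponent ν h lam s := by
  set t := s ^ ν / lam
  have ht : t ≤ 2 := by rw [div_le_iff₀ hlam]; linarith
  have hhalf : t / 2 ≤ 2 * t / (t + 2) := by
    rw [le_div_iff₀ (by positivity)]; nlinarith [show 0 ≤ t by positivity]
  calc h / (2 * lam) * s ^ ν = h * (t / 2) := by simp only [t]; field_simp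
    _ ≤ mlLaplaceExponent ν h lam s :=
        mul_le_mul_of_nonneg_left (hhalf.trans (le_log_one_add_of_nonneg (by positivity))) hh

lemma tendsto_mlLaplaceExponent_atTop (hν : 0 < ν) (hh : 0 < h) (hlam : 0 < lam) :
    Tendsto (mlLaplaceExponent ν h lam) atTop atTop :=
  (tendsto_log_atTop.comp (tendsto_atTop_add_const_left _ 1
    ((tendsto_rpow_atTop hν).atTop_div_const hlam))).const_mul_atTop hh

lemma continuousOn_mlLaplaceExponent (hν : 0 ≤ ν) (hlam : 0 < lam) :
    ContinuousOn (mlLaplaceExponent ν h lam) (Ici 0) :=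
  continuousOn_const.mul <| ((continuous_const.add
    ((continuous_rpow_const hν).div_const lam)).continuousOn).log fun s (hs : 0 ≤ s) =>
      (show 0 < 1 + s ^ ν / lam by positivity).ne'

lemma exists_mul_lt_mlLaplaceExponent (hν : ν ∈ Ioo 0 1) (hh : 0 < h) (hlam : 0 < lam) (y : ℝ) :
    ∃ s > 0, s * y < mlLaplaceExponent ν h lam s := by
  obtain ⟨s, hsy, hsν, hs⟩ := ((eventually_mul_lt_mul_rpow_nhdsGT_zero hν.2
    (by positivity : 0 < h / (2 * lam)) y).and (((tendsto_rpow_nhdsGT_zero hν.1).eventually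
    (ge_mem_nhds (by linarith : (0 : ℝ) < 2 * lam))).and self_mem_nhdsWithin)).exists
  exact ⟨s, hs, hsy.trans_le (le_mlLaplaceExponent hh.le hlam (le_of_lt hs) hsν)⟩

lemma exists_isMaxOn_mlLaplaceExponent_sub (hν : ν ∈ Ioo 0 1) (hh : 0 < h) (hlam : 0 < lam)
    {y : ℝ} (hy : 0 < y) : ∃ s > 0, ∀ t, 0 ≤ t →
      mlLaplaceExponent ν h lam t - t * y ≤ mlLaplaceExponent ν h lam s - s * y := by
  obtain ⟨s₁, hs₁, hs₁y⟩ := exists_mul_lt_mlLaplaceExponent hν hh hlam y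
  have hcont : ContinuousOn (fun t => mlLaplaceExponent ν h lam t - t * y) (Ici 0) :=
    (continuousOn_mlLaplaceExponent hν.1.le hlam).sub (by fun_prop)
  have hfar : ∀ᶠ t in cocompact ℝ ⊓ 𝓟 (Ici 0),
      mlLaplaceExponent ν h lam t - t * y ≤ mlLaplaceExponent ν h lam s₁ - s₁ * y := by
    rw [cocompact_eq_atBot_atTop, inf_sup_right, (disjoint_atBot_principal_Ici (0 : ℝ)).eq_bot,
      bot_sup_eq]
    refine Eventually.filter_mono inf_le_left ?_
    filter_upwards [eventually_mul_rpow_le_mul_atTop hν.2 (h / lam) hy, eventually_ge_atTop 0]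
      with t ht ht0
    linarith [mlLaplaceExponent_le (ν := ν) hh.le hlam ht0]
  obtain ⟨s, hs, hmax⟩ := hcont.exists_isMaxOn' isClosed_Ici (mem_Ici.2 hs₁.le) hfar
  refine ⟨s, lt_of_le_of_ne hs fun hs0 => ?_, fun t ht => hmax ht⟩
  have h0 : mlLaplaceExponent ν h lam s₁ - s₁ * y ≤ mlLaplaceExponent ν h lam 0 - 0 * y :=
    hs0 ▸ hmax (mem_Ici.2 hs₁.le)
  rw [mlLaplaceExponent_zero hν.1.ne'] at h0
  linarith

lemma mlCgf_of_pos {θ : ℝ} (hθ : 0 < θ) : mlCgf ν h lam θ = ⊤ :=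
  if_neg hθ.not_ge

lemma coe_mul_sub_mlCgf (hlam : 0 < lam) (x : ℝ) {θ : ℝ} (hθ : θ ≤ 0) :
    ((θ * x : ℝ) : EReal) - mlCgf ν h lam θ =
      ((mlLaplaceExponent ν h lam (-θ) - -θ * x : ℝ) : EReal) := by
  have hfrac : lam / (lam + (-θ) ^ ν) = (1 + (-θ) ^ ν / lam)⁻¹ := by
    field_simp
  rw [mlCgf, if_pos hθ, ← EReal.coe_sub, hfrac, Real.log_inv, mlLaplaceExponent]
  congr 1
  ring

lemma coe_le_legendre_mlCgf (hlam : 0 < lam) (x : ℝ) {s : ℝ} (hs : 0 ≤ s) :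
    ((mlLaplaceExponent ν h lam s - s * x : ℝ) : EReal) ≤ legendre (mlCgf ν h lam) x := by
  have := le_legendre (mlCgf ν h lam) x (-s)
  rwa [coe_mul_sub_mlCgf hlam x (neg_nonpos.2 hs), neg_neg] at this

lemma legendre_mlCgf_le (hlam : 0 < lam) {x c : ℝ}
    (hc : ∀ s, 0 ≤ s → mlLaplaceExponent ν h lam s - s * x ≤ c) :
    legendre (mlCgf ν h lam) x ≤ c :=
  legendre_le (fun _ => mlCgf_of_pos) fun θ hθ => by
    rw [coe_mul_sub_mlCgf hlam x hθ]; exact_mod_cast hc (-θ) (neg_nonneg.2 hθ)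

lemma legendre_mlCgf_nonneg (hν : ν ≠ 0) (hlam : 0 < lam) (x : ℝ) :
    0 ≤ legendre (mlCgf ν h lam) x := by
  have := coe_le_legendre_mlCgf (ν := ν) (h := h) hlam x le_rfl
  rwa [mlLaplaceExponent_zero hν, zero_mul, sub_zero, EReal.coe_zero] at this

lemma exists_lt_legendre_mlCgf (hν : 0 < ν) (hh : 0 < h) (hlam : 0 < lam) (M : ℝ) :
    ∃ δ > 0, ∀ x < δ, (M : EReal) < legendre (mlCgf ν h lam) x := by
  obtain ⟨s, hsM, hs⟩ := (((tendsto_mlLaplaceExponent_atTop hν hh hlam).eventually_ge_atTop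
    (M + 2)).and (eventually_ge_atTop 0)).exists
  refine ⟨1 / (s + 1), by positivity, fun x hx => ?_⟩
  have hsx : s * x ≤ 1 :=
    calc s * x ≤ s * (1 / (s + 1)) := by gcongr
      _ ≤ 1 := by rw [mul_one_div, div_le_one (by linarith)]; linarith
  exact lt_of_lt_of_le (by exact_mod_cast (by linarith : M < mlLaplaceExponent ν h lam s - s * x))
    (coe_le_legendre_mlCgf hlam x hs)

lemma legendre_mlCgf_of_nonpos (hν : 0 < ν) (hh : 0 < h) (hlam : 0 < lam) {x : ℝ}
    (hx : x ≤ 0) : legendre (mlCgf ν h lam) x = ⊤ :=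
  (EReal.eq_top_iff_forall_lt _).2 fun M =>
    let ⟨_, hδ, hM⟩ := exists_lt_legendre_mlCgf hν hh hlam M
    hM x (hx.trans_lt hδ)

lemma tendsto_legendre_mlCgf_nhdsGT_zero (hν : 0 < ν) (hh : 0 < h) (hlam : 0 < lam) :
    Tendsto (legendre (mlCgf ν h lam)) (𝓝[>] 0) (𝓝 ⊤) :=
  EReal.tendsto_nhds_top_iff_real.2 fun M =>
    let ⟨_, hδ, hM⟩ := exists_lt_legendre_mlCgf hν hh hlam M
    (eventually_nhdsWithin_of_eventually_nhds (eventually_lt_nhds hδ)).mono hM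

lemma strictAntiOn_legendre_mlCgf (hν : ν ∈ Ioo 0 1) (hh : 0 < h) (hlam : 0 < lam) :
    StrictAntiOn (legendre (mlCgf ν h lam)) (Ioi 0) := by
  intro x _ y hy hxy
  obtain ⟨s, hs, hmax⟩ := exists_isMaxOn_mlLaplaceExponent_sub hν hh hlam hy
  have hsxy : s * x < s * y := mul_lt_mul_of_pos_left hxy hs
  calc legendre (mlCgf ν h lam) y ≤ ((mlLaplaceExponent ν h lam s - s * y : ℝ) : EReal) :=
        legendre_mlCgf_le hlam hmax
    _ < ((mlLaplaceExponent ν h lam s - s * x : ℝ) : EReal) := by exact_mod_cast by linarith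
    _ ≤ legendre (mlCgf ν h lam) x := coe_le_legendre_mlCgf hlam x hs.le

lemma tendsto_legendre_mlCgf_atTop (hν : ν ∈ Ioo 0 1) (hh : 0 < h) (hlam : 0 < lam) :
    Tendsto (legendre (mlCgf ν h lam)) atTop (𝓝 0) := by
  refine tendsto_order.2 ⟨fun a ha => Eventually.of_forall fun x =>
    ha.trans_le (legendre_mlCgf_nonneg hν.1.ne' hlam x), fun b hb => ?_⟩
  obtain ⟨ε, hε, hεb⟩ := EReal.lt_iff_exists_real_btwn.1 hb
  filter_upwards [eventually_forall_mul_rpow_sub_mul_le hν.1 hν.2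
    (div_nonneg hh.le hlam.le) (EReal.coe_pos.1 hε)] with x hx
  exact (legendre_mlCgf_le hlam fun s hs =>
    (sub_le_sub_right (mlLaplaceExponent_le hh.le hlam hs) _).trans (hx s hs)).trans_lt hεb

end MittagLeffler

/-- Properties of the Legendre transform of the generalized Mittag-Leffler cumulant
generating function, `ν ∈ (0,1)`: infinite on `(-∞,0]`, strictly decreasing on `(0,∞)`,
blows up at `0+`, vanishes at `∞`, and is not a good rate function. -/
theorem legendre_mittagLeffler_cgf_properties (ν h lam : ℝ) (hν : ν ∈ Set.Ioo (0 : ℝ) 1)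
    (hh : 0 < h) (hlam : 0 < lam)
    (κ : ℝ → EReal)
    (hκ : ∀ θ : ℝ, κ θ = if θ ≤ 0
      then ((h * Real.log (lam / (lam + (-θ) ^ ν)) : ℝ) : EReal) else ⊤)
    (I : ℝ → EReal) (hI : ∀ x, I x = legendre κ x) :
    (∀ x : ℝ, x ≤ 0 → I x = ⊤) ∧
    StrictAntiOn I (Set.Ioi 0) ∧
    Tendsto I (nhdsWithin 0 (Set.Ioi 0)) (nhds ⊤) ∧
    Tendsto I atTop (nhds (0 : EReal)) ∧
    ¬ GoodRate I := by
  obtain rfl : κ = mlCgf ν h lam := funext hκ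
  obtain rfl : I = legendre (mlCgf ν h lam) := funext hI
  have hlim := tendsto_legendre_mlCgf_atTop hν hh hlam
  exact ⟨fun _ => legendre_mlCgf_of_nonpos hν.1 hh hlam, strictAntiOn_legendre_mlCgf hν hh hlam,
    tendsto_legendre_mlCgf_nhdsGT_zero hν.1 hh hlam, hlim, not_goodRate_of_tendsto_atTop_zero hlim⟩
end

section
/- Let ν ∈ (0,1), h, λ > 0, let κ_{ν,h,λ}(θ) = h·log(λ/(λ+(−θ)^ν)) for θ ≤ 0 and ∞ for θ > 0, let I^{(T)}_{ν,h,λ}(y) := sup_{θ∈ℝ} {θy − κ_{ν,h,λ}(θ)}, and define I^{(M)}_{ν,h,λ}(x) := x·I^{(T)}_{ν,h,λ}(1/x) for x > 0, I^{(M)}_{ν,h,λ}(0) := 0, and I^{(M)}_{ν,h,λ}(x) := ∞ for x < 0. Then: I^{(M)}_{ν,h,λ} is increasing on [0,∞); lim_{x↓0} I^{(M)}_{ν,h,λ}(x) = I^{(M)}_{ν,h,λ}(0) = 0; and lim_{x→∞} I^{(M)}_{ν,h,λ}(x) = ∞. -/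
open MeasureTheory Filter Real ProbabilityTheory
open scoped ENNReal NNReal

/-!
Writing `s = -θ ≥ 0`, for `x > 0` we have `x I^{(T)}(1/x) = sup_{s ≥ 0} (h x log (1 + s^ν/λ) - s)`, a
supremum of nondecreasing affine functions of `x` which vanishes at `x = 0`; this gives monotonicity.
Since `s^ν ≤ 1 + s` and `log (1 + u) ≤ u`, each of these affine functions is at most
`(h x / λ)(1 + s) - s ≤ h x / λ` once `h x ≤ λ`, so the supremum tends to `0` as `x ↓ 0`;
the term `s = 1` alone is `h x log (1 + 1/λ) - 1 → ∞`.
-/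

open Topology

namespace EReal

lemma coe_mul_iSup {ι : Sort*} (f : ι → EReal) {c : ℝ} (hc : 0 < c) :
    (c : EReal) * ⨆ i, f i = ⨆ i, (c : EReal) * f i := by
  have hc' : (0 : EReal) < c := by exact_mod_cast hc
  refine le_antisymm ?_ (iSup_le fun i => mul_le_mul_of_nonneg_left (le_iSup f i) hc'.le)
  rw [mul_comm, ← EReal.le_div_iff_mul_le hc' (coe_ne_top c)]
  refine iSup_le fun i => ?_
  rw [EReal.le_div_iff_mul_le hc' (coe_ne_top c), mul_comm]
  exact le_iSup (fun i => (c : EReal) * f i) i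

end EReal

/-- For `x > 0` this is `x κ*(1/x)`, where `κ = k` on `(-∞, 0]` and `κ = ∞` on `(0, ∞)`. -/
noncomputable def legendrePerspective (k : ℝ → ℝ) (x : ℝ) : EReal :=
  ⨆ (θ : ℝ) (_ : θ ≤ 0), ((θ - x * k θ : ℝ) : EReal)

section LegendrePerspective

variable {k : ℝ → ℝ}

theorem coe_mul_legendre_one_div {x : ℝ} (hx : 0 < x) :
    (x : EReal) * legendre (fun θ => if θ ≤ 0 then (k θ : EReal) else ⊤) (1 / x)
      = legendrePerspective k x := by
  rw [legendre, EReal.coe_mul_iSup _ hx, legendrePerspective]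
  refine iSup_congr fun θ => ?_
  by_cases hθ : θ ≤ 0
  · rw [iSup_pos hθ, if_pos hθ, ← EReal.coe_sub, ← EReal.coe_mul]
    congr 1
    field_simp
  · rw [iSup_neg hθ, if_neg hθ, EReal.sub_top, EReal.coe_mul_bot_of_pos hx]

theorem legendrePerspective_zero : legendrePerspective k 0 = 0 :=
  le_antisymm (iSup₂_le fun θ hθ => by simpa using hθ)
    (le_iSup₂_of_le (f := fun θ (_ : θ ≤ 0) => ((θ - 0 * k θ : ℝ) : EReal)) 0 le_rfl (by simp))

theorem coe_sub_mul_le_legendrePerspective {θ : ℝ} (hθ : θ ≤ 0) (x : ℝ) :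
    ((θ - x * k θ : ℝ) : EReal) ≤ legendrePerspective k x :=
  le_iSup₂ (f := fun θ (_ : θ ≤ 0) => ((θ - x * k θ : ℝ) : EReal)) θ hθ

theorem legendrePerspective_monotone (hk : ∀ θ ≤ 0, k θ ≤ 0) :
    Monotone (legendrePerspective k) := fun x y hxy =>
  iSup₂_mono fun θ hθ => EReal.coe_le_coe_iff.2 (by nlinarith [hk θ hθ])

theorem legendrePerspective_le_of_linear_lower_bound {A B x : ℝ}
    (hk : ∀ θ ≤ 0, -(A - B * θ) ≤ k θ) (hx : 0 ≤ x) (hxB : x * B ≤ 1) :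
    legendrePerspective k x ≤ (x * A : ℝ) :=
  iSup₂_le fun θ hθ => EReal.coe_le_coe_iff.2 <| by
    nlinarith [mul_le_mul_of_nonneg_left (hk θ hθ) hx,
      mul_nonneg_of_nonpos_of_nonpos hθ (sub_nonpos.2 hxB)]

theorem tendsto_legendrePerspective_nhdsGT_zero {A B : ℝ} (hk_nonpos : ∀ θ ≤ 0, k θ ≤ 0)
    (hk : ∀ θ ≤ 0, -(A - B * θ) ≤ k θ) :
    Tendsto (legendrePerspective k) (𝓝[>] 0) (𝓝 0) := by
  have hA : Tendsto (fun x : ℝ => ((x * A : ℝ) : EReal)) (𝓝[>] 0) (𝓝 0) := by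
    have := ((continuous_mul_const A).tendsto 0).mono_left (nhdsWithin_le_nhds (s := Set.Ioi 0))
    simpa using EReal.tendsto_coe.2 this
  have hB : ∀ᶠ x in 𝓝[>] (0 : ℝ), x * B ≤ 1 := by
    have := ((continuous_mul_const B).tendsto 0).mono_left (nhdsWithin_le_nhds (s := Set.Ioi 0))
    exact this.eventually (ge_mem_nhds (by simp))
  refine tendsto_of_tendsto_of_tendsto_of_le_of_le' tendsto_const_nhds hA ?_ ?_
  · filter_upwards [self_mem_nhdsWithin] with x hx
    rw [← legendrePerspective_zero (k := k)]
    exact legendrePerspective_monotone hk_nonpos hx.le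
  · filter_upwards [self_mem_nhdsWithin, hB] with x hx hxB
    exact legendrePerspective_le_of_linear_lower_bound hk hx.le hxB

theorem tendsto_legendrePerspective_atTop {θ : ℝ} (hθ : θ ≤ 0) (hk : k θ < 0) :
    Tendsto (legendrePerspective k) atTop (𝓝 ⊤) := by
  refine tendsto_nhds_top_mono' ?_ (coe_sub_mul_le_legendrePerspective hθ)
  refine EReal.tendsto_coe_nhds_top_iff.2 (tendsto_atTop_add_const_left _ _ ?_)
  simpa [neg_mul] using tendsto_id.atTop_mul_const (neg_pos.2 hk)

end LegendrePerspective

theorem Real.rpow_le_one_add {s ν : ℝ} (hs : 0 ≤ s) (hν₀ : 0 ≤ ν) (hν₁ : ν ≤ 1) :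
    s ^ ν ≤ 1 + s := by
  calc s ^ ν ≤ (1 + s) ^ ν := rpow_le_rpow hs (by linarith) hν₀
    _ ≤ 1 + ν * s := rpow_one_add_le_one_add_mul_self (by linarith) hν₀ hν₁
    _ ≤ 1 + s := by nlinarith

theorem Real.neg_div_le_log_div_add {lam t : ℝ} (hlam : 0 < lam) (ht : 0 ≤ t) :
    -(t / lam) ≤ log (lam / (lam + t)) := by
  have := one_sub_inv_le_log_of_pos (x := lam / (lam + t)) (by positivity)
  rw [inv_div, add_div, div_self hlam.ne'] at this
  linarith

section MittagLefflerCgf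

variable {ν h lam θ : ℝ}

theorem mul_log_div_add_rpow_nonpos (hh : 0 ≤ h) (hlam : 0 < lam) (hθ : θ ≤ 0) :
    h * log (lam / (lam + (-θ) ^ ν)) ≤ 0 := by
  have hs : 0 ≤ (-θ) ^ ν := rpow_nonneg (neg_nonneg.2 hθ) ν
  refine mul_nonpos_of_nonneg_of_nonpos hh (log_nonpos (by positivity) ?_)
  exact (div_le_one (by positivity)).2 (by linarith)

theorem linear_le_mul_log_div_add_rpow (hν₀ : 0 ≤ ν) (hν₁ : ν ≤ 1) (hh : 0 ≤ h)
    (hlam : 0 < lam) (hθ : θ ≤ 0) :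
    -(h / lam - h / lam * θ) ≤ h * log (lam / (lam + (-θ) ^ ν)) := by
  have hs : 0 ≤ -θ := neg_nonneg.2 hθ
  have hlog := Real.neg_div_le_log_div_add hlam (rpow_nonneg hs ν)
  have hpow := div_le_div_of_nonneg_right (Real.rpow_le_one_add hs hν₀ hν₁) hlam.le
  have := mul_le_mul_of_nonneg_left ((neg_le.1 hlog).trans hpow) hh
  rw [mul_neg] at this
  linarith [show h * ((1 + -θ) / lam) = h / lam - h / lam * θ by ring]

theorem mul_log_div_add_one_neg (hh : 0 < h) (hlam : 0 < lam) :
    h * log (lam / (lam + 1)) < 0 :=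
  mul_neg_of_pos_of_neg hh (log_neg (by positivity) ((div_lt_one (by linarith)).2 (by linarith)))

end MittagLefflerCgf

/-- Properties of the rate function `I^{(M)}_{ν,h,λ}` for `ν ∈ (0,1)`: it is increasing on
`[0,∞)`, tends to `0 = I^{(M)}(0)` as `x ↓ 0`, and tends to `∞` as `x → ∞`. -/
theorem rate_function_IM_properties (ν h lam : ℝ) (hν : ν ∈ Set.Ioo (0 : ℝ) 1)
    (hh : 0 < h) (hlam : 0 < lam)
    (κ : ℝ → EReal)
    (hκ : ∀ θ : ℝ, κ θ = if θ ≤ 0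
      then ((h * Real.log (lam / (lam + (-θ) ^ ν)) : ℝ) : EReal) else ⊤)
    (IT : ℝ → EReal) (hIT : ∀ y, IT y = legendre κ y)
    (IM : ℝ → EReal)
    (hIM : ∀ x : ℝ, IM x =
      if 0 < x then ((x : ℝ) : EReal) * IT (1 / x)
      else if x = 0 then 0
      else ⊤) :
    MonotoneOn IM (Set.Ici 0) ∧
    IM 0 = 0 ∧
    Tendsto IM (nhdsWithin 0 (Set.Ioi 0)) (nhds 0) ∧
    Tendsto IM atTop (nhds ⊤) := by
  obtain ⟨hν₀, hν₁⟩ := hν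
  set k : ℝ → ℝ := fun θ => h * log (lam / (lam + (-θ) ^ ν))
  have hIM_eq : Set.EqOn IM (legendrePerspective k) (Set.Ici 0) := by
    intro x (hx : 0 ≤ x)
    rcases hx.eq_or_lt with rfl | hx
    · simp [hIM, legendrePerspective_zero]
    · rw [hIM, if_pos hx, hIT, show κ = _ from funext hκ, coe_mul_legendre_one_div hx]
  have hk_nonpos : ∀ θ ≤ 0, k θ ≤ 0 := fun θ => mul_log_div_add_rpow_nonpos hh.le hlam
  have hk_linear : ∀ θ ≤ 0, -(h / lam - h / lam * θ) ≤ k θ := fun θ =>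
    linear_le_mul_log_div_add_rpow hν₀.le hν₁.le hh.le hlam
  have hk_neg_one : k (-1) < 0 := by simpa [k] using mul_log_div_add_one_neg hh hlam
  refine ⟨(legendrePerspective_monotone hk_nonpos).monotoneOn _ |>.congr hIM_eq.symm,
    by simp [hIM], ?_, ?_⟩
  · exact (tendsto_legendrePerspective_nhdsGT_zero hk_nonpos hk_linear).congr'
      (eventuallyEq_nhdsWithin_of_eqOn (hIM_eq.mono Set.Ioi_subset_Ici_self)).symm
  · exact (tendsto_legendrePerspective_atTop (by norm_num) hk_neg_one).congr'
      ((eventually_ge_atTop 0).mono fun x hx => (hIM_eq hx).symm)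
end

section
/- Let h, λ > 0 and ν = 1/2, and let κ_{1/2,h,λ}(θ) = h·log(λ/(λ+√(−θ))) for θ ≤ 0 and ∞ for θ > 0. Then for every x > 0, the Legendre transform I^{(T)}_{1/2,h,λ}(x) := sup_{θ≤0} {θx − h·log(λ/(λ+(−θ)^{1/2}))} is attained at θ = −(−λ/2 + (1/2)√(λ² + 2h/x))² and equals −x·((1/2)√(λ² + 2h/x) − λ/2)² + h·log(1/2 + (1/2)√(1 + 2h/(λ²x))). -/
open MeasureTheory Filter Real ProbabilityTheory
open scoped ENNReal NNReal

/-! Substituting `θ = -u²` with `u ≥ 0` turns the objective into `u ↦ -x u² + h log ((λ + u) / λ)`,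
which is concave in `u`; its derivative vanishes where `2 x u (λ + u) = h`, whose positive root is
`u₀ = (√(λ² + 2h/x) - λ) / 2`. The tangent-line bound `log b - log a ≤ (b - a) / a` at `u₀` gives
global maximality, and `θ₀ = -u₀²`. -/

lemma Real.log_sub_log_le_div {a b : ℝ} (ha : 0 < a) (hb : 0 < b) :
    log b - log a ≤ (b - a) / a := by
  rw [← log_div hb.ne' ha.ne', sub_div, div_self ha.ne']
  exact log_le_sub_one_of_pos (div_pos hb ha)

lemma Real.sqrt_one_add_div_sq {a c : ℝ} (hc : 0 < c) : √(1 + a / c ^ 2) = √(c ^ 2 + a) / c := by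
  rw [show 1 + a / c ^ 2 = (c ^ 2 + a) / c ^ 2 by field_simp, sqrt_div' _ (by positivity),
    sqrt_sq hc.le]

lemma neg_sq_mul_sub_mul_log_div_le {c h x u u₀ : ℝ} (hx : 0 ≤ x) (hc : 0 < c)
    (hu : 0 < c + u) (hu₀ : 0 ≤ u₀) (hcrit : h = 2 * x * u₀ * (c + u₀)) :
    -u ^ 2 * x - h * log (c / (c + u)) ≤ -u₀ ^ 2 * x - h * log (c / (c + u₀)) := by
  have hcu₀ : 0 < c + u₀ := by linarith
  have hlog : h * (log (c + u) - log (c + u₀)) ≤ 2 * x * u₀ * (u - u₀) :=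
    calc h * (log (c + u) - log (c + u₀))
        ≤ h * ((c + u - (c + u₀)) / (c + u₀)) := by
          gcongr
          · rw [hcrit]; positivity
          · exact log_sub_log_le_div hcu₀ hu
      _ = 2 * x * u₀ * (u - u₀) := by rw [hcrit]; field_simp; ring
  rw [log_div hc.ne' hu.ne', log_div hc.ne' hcu₀.ne']
  nlinarith [mul_nonneg hx (sq_nonneg (u - u₀))]

lemma two_mul_mul_sub_div_two_mul_add_eq {h lam x s : ℝ} (hx : x ≠ 0)
    (hs : s ^ 2 = lam ^ 2 + 2 * h / x) :
    2 * x * ((s - lam) / 2) * (lam + (s - lam) / 2) = h := by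
  have hx_div : x * (2 * h / x) = 2 * h := by field_simp
  linear_combination x / 2 * hs + hx_div / 2

/-- Explicit Legendre transform of `κ_{1/2,h,λ}`: for `x > 0` the supremum of
`θx - h log(λ/(λ+√(-θ)))` over `θ ≤ 0` is attained at
`θ₀ = -(-λ/2 + (1/2)√(λ²+2h/x))²` and equals the stated explicit value. -/
theorem legendre_half_cgf_explicit (h lam x : ℝ) (hh : 0 < h) (hlam : 0 < lam) (hx : 0 < x) :
    let g : ℝ → ℝ := fun θ => θ * x - h * Real.log (lam / (lam + Real.sqrt (-θ)))
    let θ₀ : ℝ := -(-(lam / 2) + Real.sqrt (lam ^ 2 + 2 * h / x) / 2) ^ 2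
    let V : ℝ := -x * (Real.sqrt (lam ^ 2 + 2 * h / x) / 2 - lam / 2) ^ 2
      + h * Real.log (1 / 2 + Real.sqrt (1 + 2 * h / (lam ^ 2 * x)) / 2)
    θ₀ ≤ 0 ∧ g θ₀ = V ∧ IsGreatest (g '' Set.Iic 0) V := by
  intro g θ₀ V
  set u₀ := (√(lam ^ 2 + 2 * h / x) - lam) / 2 with hu₀
  have hS : 0 < lam ^ 2 + 2 * h / x := by positivity
  have hu₀_pos : 0 < u₀ := by
    rw [hu₀, div_pos_iff_of_pos_right two_pos, sub_pos, lt_sqrt hlam.le]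
    exact lt_add_of_pos_right _ (by positivity)
  have hcrit : h = 2 * x * u₀ * (lam + u₀) :=
    (two_mul_mul_sub_div_two_mul_add_eq hx.ne' (sq_sqrt hS.le)).symm
  have hθ₀ : θ₀ = -u₀ ^ 2 := by simp only [θ₀, hu₀]; ring
  have hθ₀_nonpos : θ₀ ≤ 0 := hθ₀ ▸ neg_nonpos.2 (sq_nonneg u₀)
  have hg_sq (u : ℝ) (hu : 0 ≤ u) : g (-u ^ 2) = -u ^ 2 * x - h * log (lam / (lam + u)) := by
    simp only [g, neg_neg, sqrt_sq hu]
  have hgθ₀ : g θ₀ = V := by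
    have hV : 1 / 2 + √(1 + 2 * h / (lam ^ 2 * x)) / 2 = (lam + u₀) / lam := by
      rw [show 2 * h / (lam ^ 2 * x) = 2 * h / x / lam ^ 2 by ring, sqrt_one_add_div_sq hlam, hu₀]
      field_simp
      ring
    simp only [V]
    rw [hθ₀, hg_sq u₀ hu₀_pos.le, hV, log_div hlam.ne' (by positivity),
      log_div (by positivity) hlam.ne', hu₀]
    ring
  refine ⟨hθ₀_nonpos, hgθ₀, ⟨θ₀, hθ₀_nonpos, hgθ₀⟩, ?_⟩
  rintro _ ⟨θ, hθ, rfl⟩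
  obtain ⟨u, hu, rfl⟩ : ∃ u, 0 ≤ u ∧ θ = -u ^ 2 :=
    ⟨√(-θ), sqrt_nonneg _, by rw [sq_sqrt (neg_nonneg.2 hθ), neg_neg]⟩
  rw [← hgθ₀, hθ₀, hg_sq u hu, hg_sq u₀ hu₀_pos.le]
  exact neg_sq_mul_sub_mul_log_div_le hx.le hlam (by linarith) hu₀_pos.le hcrit
end

section
/- Let h, λ > 0 and define Λ_{1/2,h,λ}(θ) := (λ(e^{θ/h} − 1))²·1_{θ≥0} for θ ∈ ℝ, i.e. Λ_{1/2,h,λ}(θ) = (λ(e^{θ/h}−1))² for θ ≥ 0 and 0 for θ < 0. Then for every x > 0, sup_{θ∈ℝ} {θx − Λ_{1/2,h,λ}(θ)} = hx·log(1/2 + (1/2)√(1 + 2hx/λ²)) − ((1/2)√(λ² + 2hx) − λ/2)², and the supremum is attained at θ = h·log(1/2 + (1/2)√(1 + 2hx/λ²)). -/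
open MeasureTheory Filter Real ProbabilityTheory
open scoped ENNReal NNReal

/-!
Substituting `t = exp (θ / h)` turns `θ x - Λ θ` on `θ ≥ 0` into `h x log t - λ² (t - 1)²`,
a concave function of `t > 0` whose critical point `u` solves `h x = 2 λ² u (u - 1)`, i.e.
`u = 1/2 + √(1 + 2 h x / λ²) / 2 ≥ 1`; the tangent-line bound `log t ≤ log u + t / u - 1`
shows that `u` is the maximiser. For `θ < 0` the objective is `θ x ≤ 0`, its value at `t = 1`.
-/

namespace Real

theorem mul_log_sub_mul_sq_le_of_critical {a c u t : ℝ} (ha : 0 ≤ a) (hc : 0 ≤ c)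
    (hu : 0 < u) (ht : 0 < t) (hcrit : a = 2 * c * u * (u - 1)) :
    a * log t - c * (t - 1) ^ 2 ≤ a * log u - c * (u - 1) ^ 2 := by
  have hlog : u * (log t - log u) ≤ t - u := by
    have := log_le_sub_one_of_pos (div_pos ht hu)
    rw [log_div ht.ne' hu.ne'] at this
    calc u * (log t - log u) ≤ u * (t / u - 1) := by gcongr
      _ = t - u := by field_simp
  have hslope : 0 ≤ 2 * c * (u - 1) := by nlinarith
  have hlin : a * (log t - log u) ≤ 2 * c * (u - 1) * (t - u) := by
    calc a * (log t - log u) = 2 * c * (u - 1) * (u * (log t - log u)) := by rw [hcrit]; ring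
      _ ≤ 2 * c * (u - 1) * (t - u) := by gcongr
  nlinarith [mul_nonneg hc (sq_nonneg (t - u))]

theorem eq_four_mul_mul_half_add_sqrt_mul_sub_one {a c : ℝ} (hc : c ≠ 0) (hac : 0 ≤ 1 + a / c) :
    a = 4 * c * (1 / 2 + √(1 + a / c) / 2) * (1 / 2 + √(1 + a / c) / 2 - 1) := by
  calc a = c * (√(1 + a / c) ^ 2 - 1) := by rw [sq_sqrt hac]; field_simp; ring
    _ = _ := by ring

theorem one_le_half_add_sqrt {y : ℝ} (hy : 0 ≤ y) : 1 ≤ 1 / 2 + √(1 + y) / 2 := by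
  have : 1 ≤ √(1 + y) := one_le_sqrt.mpr (le_add_of_nonneg_right hy)
  linarith

theorem mul_half_add_sqrt_sub_one {lam : ℝ} (hlam : 0 < lam) (a : ℝ) :
    lam * (1 / 2 + √(1 + a / lam ^ 2) / 2 - 1) = √(lam ^ 2 + a) / 2 - lam / 2 := by
  rw [one_add_div (by positivity), sqrt_div' _ (by positivity), sqrt_sq hlam.le]
  field_simp
  ring

end Real

open Real

/-- Explicit Legendre transform of `Λ_{1/2,h,λ}(θ) = (λ(e^{θ/h}-1))²·1_{θ≥0}`: for `x > 0`
the supremum of `θx - Λ(θ)` over `θ ∈ ℝ` is attained at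
`θ₀ = h log(1/2 + (1/2)√(1+2hx/λ²))` and equals the stated explicit value. -/
theorem legendre_Lambda_half_explicit (h lam x : ℝ) (hh : 0 < h) (hlam : 0 < lam) (hx : 0 < x) :
    let Λ : ℝ → ℝ := fun θ => if 0 ≤ θ then (lam * (Real.exp (θ / h) - 1)) ^ 2 else 0
    let θ₀ : ℝ := h * Real.log (1 / 2 + Real.sqrt (1 + 2 * h * x / lam ^ 2) / 2)
    let V : ℝ := h * x * Real.log (1 / 2 + Real.sqrt (1 + 2 * h * x / lam ^ 2) / 2)
      - (Real.sqrt (lam ^ 2 + 2 * h * x) / 2 - lam / 2) ^ 2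
    θ₀ * x - Λ θ₀ = V ∧ IsGreatest (Set.range fun θ : ℝ => θ * x - Λ θ) V := by
  intro Λ θ₀ V
  set u := 1 / 2 + √(1 + 2 * h * x / lam ^ 2) / 2 with hu
  have hcrit : h * x = 2 * lam ^ 2 * u * (u - 1) := by
    have := eq_four_mul_mul_half_add_sqrt_mul_sub_one (a := 2 * h * x) (c := lam ^ 2)
      (by positivity) (by positivity)
    rw [← hu] at this
    linarith
  have hu1 : 1 ≤ u := one_le_half_add_sqrt (by positivity)
  have hV : V = h * x * log u - lam ^ 2 * (u - 1) ^ 2 := by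
    have hdev := mul_half_add_sqrt_sub_one hlam (2 * h * x)
    rw [← hu] at hdev
    show h * x * log u - (√(lam ^ 2 + 2 * h * x) / 2 - lam / 2) ^ 2 = _
    rw [← hdev]
    ring
  have hmax : ∀ t, 0 < t →
      h * x * log t - lam ^ 2 * (t - 1) ^ 2 ≤ h * x * log u - lam ^ 2 * (u - 1) ^ 2 :=
    fun t ht ↦
      mul_log_sub_mul_sq_le_of_critical (by positivity) (sq_nonneg lam) (by linarith) ht hcrit
  have hΛ : ∀ θ, 0 ≤ θ →
      θ * x - Λ θ = h * x * log (exp (θ / h)) - lam ^ 2 * (exp (θ / h) - 1) ^ 2 := by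
    intro θ hθ
    simp only [Λ, if_pos hθ, log_exp]
    field_simp
  have hθ₀ : 0 ≤ θ₀ ∧ exp (θ₀ / h) = u :=
    ⟨mul_nonneg hh.le (log_nonneg hu1),
      by rw [mul_div_cancel_left₀ _ hh.ne', exp_log (by linarith)]⟩
  have hvalue : θ₀ * x - Λ θ₀ = V := by rw [hΛ θ₀ hθ₀.1, hθ₀.2, hV]
  refine ⟨hvalue, ⟨θ₀, hvalue⟩, ?_⟩
  rintro _ ⟨θ, rfl⟩
  rw [hV]
  by_cases hθ : 0 ≤ θ
  · exact (hΛ θ hθ).trans_le (hmax _ (exp_pos _))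
  · have hV0 : 0 ≤ h * x * log u - lam ^ 2 * (u - 1) ^ 2 := by simpa using hmax 1 one_pos
    have hθx : θ * x ≤ 0 := mul_nonpos_of_nonpos_of_nonneg (not_le.mp hθ).le hx.le
    simp only [Λ, if_neg hθ, sub_zero]
    linarith
end

section
/- Let λ > 0. For x > 0 the infimum inf_{y>0} {x·log(x/(λy)) − x + λy + y²/4} is attained at y = √(λ² + 2x) − λ and equals x·log(1/2 + (1/2)√(1 + 2x/λ²)) − ((1/2)√(λ² + 2x) − λ/2)². Consequently, defining J^{(M)}(x) := inf_{y≥0} {K(x|y) + y²/4}, where K(x|y) := x·log(x/(λy)) − x + λy for x ≥ 0, y > 0, K(x|y) := ∞ for x < 0, and K(0|0) := 0, K(x|0) := ∞ for x ≠ 0, one has J^{(M)}(x) = I^{(M)}_{1/2,1,λ}(x) for all x ∈ ℝ, where I^{(M)}_{1/2,1,λ}(x) = x·log(1/2 + (1/2)√(1 + 2x/λ²)) − ((1/2)√(λ² + 2x) − λ/2)² for x > 0, I^{(M)}_{1/2,1,λ}(0) = 0, and I^{(M)}_{1/2,1,λ}(x) = ∞ for x < 0. -/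
open MeasureTheory Filter Real ProbabilityTheory
open scoped ENNReal NNReal

/-!
Write `s = √(λ² + 2x)` and `y₀ = s - λ`, the positive root of `y²/2 + λy = x`.
In `y`, the Poisson rate `x log(x/(λy)) - x + λy` lies above its tangent at `y₀` because
`log t ≤ t - 1`, and `y²/4` lies above its tangent because `(y - y₀)² ≥ 0`; the slopes
`λ - x/y₀` and `y₀/2` cancel exactly when `y₀` is that root, so `y₀` is the global minimiser.
At `y₀` one has `x/(λy₀) = (s + λ)/(2λ)` and `-x + λy₀ + y₀²/4 = -y₀²/4`, which is the stated value.
The extended-valued identity `J^{(M)} = I^{(M)}` then only adds the boundary cases `x ≤ 0` and `y = 0`.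
-/

noncomputable def poissonRate (lam x y : ℝ) : ℝ := x * log (x / (lam * y)) - x + lam * y

noncomputable def extendedPoissonRate (lam x y : ℝ) : EReal :=
  if x < 0 then ⊤
  else if 0 < y then (poissonRate lam x y : EReal)
  else if x = 0 then 0 else ⊤

-- the finite branch of `I^{(M)}_{1/2,1,λ}`
noncomputable def mixedRate (lam x : ℝ) : ℝ :=
  x * log (1 / 2 + √(1 + 2 * x / lam ^ 2) / 2) - (√(lam ^ 2 + 2 * x) / 2 - lam / 2) ^ 2

theorem poissonRate_tangent_le {lam x y₀ y : ℝ} (hlam : 0 < lam) (hx : 0 ≤ x) (hy₀ : 0 < y₀)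
    (hy : 0 < y) :
    poissonRate lam x y₀ + (lam - x / y₀) * (y - y₀) ≤ poissonRate lam x y := by
  rcases hx.eq_or_lt with rfl | hx
  · simp only [poissonRate, zero_mul, zero_div, sub_zero, zero_add]
    linarith
  have hsplit : log (x / (lam * y)) = log (x / (lam * y₀)) - log (y / y₀) := by
    rw [← log_div (by positivity) (by positivity)]
    congr 1
    field_simp
  have hlog : x * log (y / y₀) ≤ x * (y / y₀ - 1) :=
    mul_le_mul_of_nonneg_left (log_le_sub_one_of_pos (by positivity)) hx.le
  have hlin : x * (y / y₀ - 1) = x / y₀ * (y - y₀) := by field_simp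
  unfold poissonRate
  rw [hsplit]
  nlinarith

theorem poissonRate_add_sq_le_of_root {lam x y₀ y : ℝ} (hlam : 0 < lam) (hy₀ : 0 < y₀)
    (hroot : y₀ * (lam + y₀ / 2) = x) (hy : 0 < y) :
    poissonRate lam x y₀ + y₀ ^ 2 / 4 ≤ poissonRate lam x y + y ^ 2 / 4 := by
  have hx : 0 ≤ x := by rw [← hroot]; positivity
  have htangent := poissonRate_tangent_le hlam hx hy₀ hy
  have hslope : lam - x / y₀ = -(y₀ / 2) := by
    rw [← hroot]
    field_simp
    ring
  rw [hslope] at htangent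
  nlinarith [sq_nonneg (y - y₀)]

theorem sqrt_sub_pos {lam x : ℝ} (hlam : 0 ≤ lam) (hx : 0 < x) : 0 < √(lam ^ 2 + 2 * x) - lam := by
  have : lam < √(lam ^ 2 + 2 * x) := (lt_sqrt hlam).mpr (by linarith)
  linarith

theorem sqrt_sub_mul_add_half_eq {lam x : ℝ} (hx : 0 ≤ lam ^ 2 + 2 * x) :
    (√(lam ^ 2 + 2 * x) - lam) * (lam + (√(lam ^ 2 + 2 * x) - lam) / 2) = x := by
  nlinarith [sq_sqrt hx]

theorem poissonRate_add_sq_at_root {lam x : ℝ} (hlam : 0 < lam) (hx : 0 < x) :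
    poissonRate lam x (√(lam ^ 2 + 2 * x) - lam) + (√(lam ^ 2 + 2 * x) - lam) ^ 2 / 4 =
      mixedRate lam x := by
  set s := √(lam ^ 2 + 2 * x)
  have hs2 : s ^ 2 = lam ^ 2 + 2 * x := sq_sqrt (by positivity)
  have hy₀ : 0 < s - lam := sqrt_sub_pos hlam.le hx
  have hsqrt : √(1 + 2 * x / lam ^ 2) = s / lam := by
    rw [show 1 + 2 * x / lam ^ 2 = (lam ^ 2 + 2 * x) / lam ^ 2 by field_simp,
      sqrt_div (by positivity), sqrt_sq hlam.le]
  have hratio : x / (lam * (s - lam)) = 1 / 2 + √(1 + 2 * x / lam ^ 2) / 2 := by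
    rw [hsqrt, div_eq_iff (by positivity)]
    field_simp
    nlinarith
  unfold poissonRate mixedRate
  rw [hratio]
  nlinarith

theorem isLeast_poissonRate_add_sq {lam x : ℝ} (hlam : 0 < lam) (hx : 0 < x) :
    IsLeast ((fun y => poissonRate lam x y + y ^ 2 / 4) '' Set.Ioi 0) (mixedRate lam x) := by
  have hy₀ := sqrt_sub_pos hlam.le hx
  refine ⟨⟨_, hy₀, poissonRate_add_sq_at_root hlam hx⟩, ?_⟩
  rintro _ ⟨y, hy, rfl⟩
  rw [← poissonRate_add_sq_at_root hlam hx]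
  exact poissonRate_add_sq_le_of_root hlam hy₀ (sqrt_sub_mul_add_half_eq (by positivity)) hy

theorem iInf_extendedPoissonRate_add_sq_of_neg {lam x : ℝ} (hx : x < 0) :
    ⨅ y ∈ Set.Ici (0 : ℝ), extendedPoissonRate lam x y + ((y ^ 2 / 4 : ℝ) : EReal) = ⊤ := by
  simp [extendedPoissonRate, hx]

theorem iInf_extendedPoissonRate_add_sq_zero {lam : ℝ} (hlam : 0 ≤ lam) :
    ⨅ y ∈ Set.Ici (0 : ℝ), extendedPoissonRate lam 0 y + ((y ^ 2 / 4 : ℝ) : EReal) = 0 := by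
  refine le_antisymm (iInf₂_le_of_le 0 Set.self_mem_Ici (by simp [extendedPoissonRate]))
    (le_iInf₂ fun y hy => ?_)
  rcases (Set.mem_Ici.mp hy).eq_or_lt with rfl | hy
  · simp [extendedPoissonRate]
  · have : (0 : ℝ) ≤ poissonRate lam 0 y + y ^ 2 / 4 := by
      simp only [poissonRate, zero_mul, sub_zero, zero_add]
      positivity
    simpa [extendedPoissonRate, hy, ← EReal.coe_add] using this

theorem iInf_extendedPoissonRate_add_sq_of_pos {lam x : ℝ} (hlam : 0 < lam) (hx : 0 < x) :
    ⨅ y ∈ Set.Ici (0 : ℝ), extendedPoissonRate lam x y + ((y ^ 2 / 4 : ℝ) : EReal) =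
      mixedRate lam x := by
  have hleast := isLeast_poissonRate_add_sq hlam hx
  obtain ⟨y₀, hy₀, hy₀_eq⟩ := hleast.1
  refine le_antisymm (iInf₂_le_of_le y₀ (Set.Ioi_subset_Ici_self hy₀) ?_)
    (le_iInf₂ fun y hy => ?_)
  · simp [extendedPoissonRate, hx.not_gt, Set.mem_Ioi.mp hy₀, ← EReal.coe_add, ← hy₀_eq]
  rcases (Set.mem_Ici.mp hy).eq_or_lt with rfl | hy
  · simp [extendedPoissonRate, hx.not_gt, hx.ne']
  · simp only [extendedPoissonRate, hx.not_gt, hy, if_true, if_false, ← EReal.coe_add,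
      EReal.coe_le_coe_iff]
    exact hleast.2 ⟨y, hy, rfl⟩

/-- The infimum `inf_{y>0} {x log(x/(λy)) - x + λy + y²/4}` is attained at
`y = √(λ²+2x) - λ` with the stated explicit value; consequently
`J^{(M)} = I^{(M)}_{1/2,1,λ}`. -/
theorem inf_formula_and_JM_eq_IM (lam : ℝ) (hlam : 0 < lam)
    (K : ℝ → ℝ → EReal)
    (hK : ∀ x y : ℝ, K x y =
      if x < 0 then ⊤
      else if 0 < y then ((x * Real.log (x / (lam * y)) - x + lam * y : ℝ) : EReal)
      else if x = 0 then 0 else ⊤)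
    (JM : ℝ → EReal)
    (hJM : ∀ x : ℝ, JM x = ⨅ y ∈ Set.Ici (0 : ℝ), K x y + ((y ^ 2 / 4 : ℝ) : EReal))
    (IM : ℝ → EReal)
    (hIM : ∀ x : ℝ, IM x =
      if 0 < x then
        ((x * Real.log (1 / 2 + Real.sqrt (1 + 2 * x / lam ^ 2) / 2)
          - (Real.sqrt (lam ^ 2 + 2 * x) / 2 - lam / 2) ^ 2 : ℝ) : EReal)
      else if x = 0 then 0 else ⊤) :
    (∀ x : ℝ, 0 < x →
      (fun y : ℝ => x * Real.log (x / (lam * y)) - x + lam * y + y ^ 2 / 4)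
          (Real.sqrt (lam ^ 2 + 2 * x) - lam)
        = x * Real.log (1 / 2 + Real.sqrt (1 + 2 * x / lam ^ 2) / 2)
          - (Real.sqrt (lam ^ 2 + 2 * x) / 2 - lam / 2) ^ 2
      ∧ IsLeast
          ((fun y : ℝ => x * Real.log (x / (lam * y)) - x + lam * y + y ^ 2 / 4) '' Set.Ioi 0)
          (x * Real.log (1 / 2 + Real.sqrt (1 + 2 * x / lam ^ 2) / 2)
            - (Real.sqrt (lam ^ 2 + 2 * x) / 2 - lam / 2) ^ 2)) ∧
    (∀ x : ℝ, JM x = IM x) := by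
  refine ⟨fun x hx => ⟨poissonRate_add_sq_at_root hlam hx, isLeast_poissonRate_add_sq hlam hx⟩,
    fun x => ?_⟩
  have hKE : K = extendedPoissonRate lam := funext₂ hK
  rw [hJM, hIM, hKE]
  rcases lt_trichotomy x 0 with hx | rfl | hx
  · rw [iInf_extendedPoissonRate_add_sq_of_neg hx, if_neg hx.not_gt, if_neg hx.ne]
  · rw [iInf_extendedPoissonRate_add_sq_zero hlam.le, if_neg (lt_irrefl 0), if_pos rfl]
  · rw [iInf_extendedPoissonRate_add_sq_of_pos hlam hx, if_pos hx, mixedRate]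
end

section
/- Let ν ∈ (0,1), h, λ, c > 0 and θ ≥ 0. The identity e^{−cθt}·E^h_{ν,νh}(−λt^ν) = E^h_{ν,νh}(−(λ+(cθ)^ν)·t^ν) holds for all t > 0 if and only if θ = 0. In contrast, for ν = 1 the identity e^{−cθt}·E^h_{1,h}(−λt) = E^h_{1,h}(−(λ+cθ)t) holds for all t > 0 and all θ ≥ 0. -/
open MeasureTheory Filter Real ProbabilityTheory
open scoped ENNReal NNReal

/-!
For `ν = 1` the series is `e^x / Γ(h)`, so tilting by `e^{-cθt}` only shifts the argument.
For `ν < 1`, the function `F = E^h_{ν,νh}` is analytic at `0` with `F'(0) = h / Γ(ν + νh) > 0`.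
With `s = t^ν` and `μ = (cθ)^ν` the identity reads `F(-λs) - F(-(λ+μ)s) = (1 - e^{-cθt}) F(-λs)`.
Divided by `s`, the left side tends to `F'(0) μ` as `t → 0+`, whereas the right side is
`O(t^{1-ν})` and tends to `0`; hence `μ = 0`, i.e. `θ = 0`.
-/

open Nat FormalMultilinearSeries Topology Filter

lemma pochhammerReal_pos {γ : ℝ} (hγ : 0 < γ) (r : ℕ) : 0 < pochhammerReal γ r :=
  Finset.prod_pos fun i _ => by positivity

lemma abs_pochhammerReal_le (γ : ℝ) (r : ℕ) :
    |pochhammerReal γ r| ≤ max |γ| 1 ^ r * r ! := by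
  have hterm (i : ℕ) : |γ + i| ≤ max |γ| 1 * (i + 1 : ℕ) := by
    push_cast
    have hi : (0 : ℝ) ≤ i := Nat.cast_nonneg i
    nlinarith [abs_add_le γ i, abs_of_nonneg hi, le_max_left |γ| 1, le_max_right |γ| 1]
  calc |pochhammerReal γ r| = ∏ i ∈ Finset.range r, |γ + i| := Finset.abs_prod _ _
    _ ≤ ∏ i ∈ Finset.range r, max |γ| 1 * (i + 1 : ℕ) :=
      Finset.prod_le_prod (fun _ _ => abs_nonneg _) fun i _ => hterm i
    _ = max |γ| 1 ^ r * r ! := by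
      rw [Finset.prod_mul_distrib, Finset.prod_const, Finset.card_range, ← Nat.cast_prod,
        Finset.prod_range_add_one_eq_factorial]

lemma Gamma_add_nat_eq_pochhammerReal_mul {γ : ℝ} (hγ : 0 < γ) (r : ℕ) :
    Real.Gamma (γ + r) = pochhammerReal γ r * Real.Gamma γ := by
  induction r with
  | zero => simp [pochhammerReal]
  | succ r ih =>
    rw [Nat.cast_succ, ← add_assoc, Real.Gamma_add_one (by positivity), ih, pochhammerReal,
      pochhammerReal, Finset.prod_range_succ]
    ring

noncomputable def genMLCoeff (α β γ : ℝ) (r : ℕ) : ℝ :=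
  pochhammerReal γ r / (r ! * Real.Gamma (α * r + β))

lemma genML_eq_ofScalarsSum (α β γ : ℝ) : genML α β γ = ofScalarsSum (genMLCoeff α β γ) := by
  ext x
  rw [ofScalars_sum_eq]
  exact tsum_congr fun r => by rw [genMLCoeff, smul_eq_mul]; ring

lemma genMLCoeff_pos {α β γ : ℝ} (hα : 0 ≤ α) (hβ : 0 < β) (hγ : 0 < γ) (r : ℕ) :
    0 < genMLCoeff α β γ r :=
  div_pos (pochhammerReal_pos hγ r)
    (mul_pos (by positivity) (Real.Gamma_pos_of_pos (by positivity)))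

lemma exists_abs_genMLCoeff_le {α β : ℝ} (hα : 0 ≤ α) (hβ : 0 < β) (γ : ℝ) :
    ∃ C, ∀ r, |genMLCoeff α β γ r| ≤ C * max |γ| 1 ^ r := by
  obtain ⟨x₀, hx₀, hmin⟩ := Real.exists_isMinOn_Gamma_Ioi
  have hΓx₀ : 0 < Real.Gamma x₀ := Real.Gamma_pos_of_pos (by linarith [hx₀.1])
  refine ⟨(Real.Gamma x₀)⁻¹, fun r => ?_⟩
  have harg : 0 < α * r + β := by positivity
  have hΓ : Real.Gamma x₀ ≤ Real.Gamma (α * r + β) := hmin (Set.mem_Ioi.2 harg)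
  have hfac : (0 : ℝ) < r ! := by positivity
  rw [genMLCoeff, abs_div, abs_of_pos (mul_pos hfac (hΓx₀.trans_le hΓ)),
    div_le_iff₀ (by positivity)]
  calc |pochhammerReal γ r| ≤ max |γ| 1 ^ r * r ! := abs_pochhammerReal_le γ r
    _ = (Real.Gamma x₀)⁻¹ * max |γ| 1 ^ r * (r ! * Real.Gamma x₀) := by field_simp
    _ ≤ _ := by gcongr

lemma radius_ofScalars_genMLCoeff_pos {α β : ℝ} (hα : 0 ≤ α) (hβ : 0 < β) (γ : ℝ) :
    0 < (ofScalars ℝ (genMLCoeff α β γ)).radius := by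
  obtain ⟨C, hC⟩ := exists_abs_genMLCoeff_le hα hβ γ
  have hM : 0 < max |γ| 1 := lt_max_of_lt_right one_pos
  refine lt_of_lt_of_le ?_ ((ofScalars ℝ (genMLCoeff α β γ)).le_radius_of_bound C
    (r := (max |γ| 1)⁻¹.toNNReal) fun n => ?_)
  · simp [hM]
  · rw [ofScalars_norm, Real.norm_eq_abs, Real.coe_toNNReal _ (by positivity), inv_pow]
    calc |genMLCoeff α β γ n| * (max |γ| 1 ^ n)⁻¹ ≤ C * max |γ| 1 ^ n * (max |γ| 1 ^ n)⁻¹ := by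
          gcongr; exact hC n
      _ = C := by field_simp

lemma hasDerivAt_genML_zero {α β : ℝ} (hα : 0 ≤ α) (hβ : 0 < β) (γ : ℝ) :
    HasDerivAt (genML α β γ) (genMLCoeff α β γ 1) 0 := by
  have := ((ofScalars ℝ (genMLCoeff α β γ)).hasFPowerSeriesOnBall
    (radius_ofScalars_genMLCoeff_pos hα hβ γ)).hasFPowerSeriesAt.hasDerivAt
  simpa [genML_eq_ofScalarsSum, ofScalarsSum, ofScalars_apply_eq] using this

lemma genML_one_self {γ : ℝ} (hγ : 0 < γ) (x : ℝ) :
    genML 1 γ γ x = Real.exp x / Real.Gamma γ := by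
  have hcoeff (r : ℕ) : genMLCoeff 1 γ γ r = (r ! : ℝ)⁻¹ / Real.Gamma γ := by
    have := (pochhammerReal_pos hγ r).ne'
    have := (Real.Gamma_pos_of_pos hγ).ne'
    rw [genMLCoeff, one_mul, add_comm, Gamma_add_nat_eq_pochhammerReal_mul hγ]
    field_simp
  rw [genML_eq_ofScalarsSum, ofScalars_sum_eq, Real.exp_eq_exp_ℝ, NormedSpace.exp_eq_tsum_div,
    ← tsum_div_const]
  exact tsum_congr fun r => by rw [hcoeff]; simp only [smul_eq_mul]; ring

lemma tendsto_rpow_nhdsGT_zero_s14 {p : ℝ} (hp : 0 < p) :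
    Tendsto (fun t : ℝ => t ^ p) (𝓝[>] 0) (𝓝[>] 0) := by
  refine tendsto_nhdsWithin_iff.2 ⟨?_, eventually_nhdsWithin_of_forall fun t ht => ?_⟩
  · simpa [Real.zero_rpow hp.ne'] using
      (Real.continuousAt_rpow_const 0 p (Or.inr hp.le)).tendsto.mono_left nhdsWithin_le_nhds
  · exact Real.rpow_pos_of_pos ht p

lemma mul_eq_zero_of_exp_mul_comp_rpow_eq {F : ℝ → ℝ} {d a lam μ ν : ℝ} (hF : HasDerivAt F d 0)
    (hν₀ : 0 < ν) (hν₁ : ν < 1)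
    (h : ∀ t : ℝ, 0 < t → Real.exp (-(a * t)) * F (-(lam * t ^ ν)) = F (-((lam + μ) * t ^ ν))) :
    d * μ = 0 := by
  set G : ℝ → ℝ := fun s => F (-(lam * s)) - F (-((lam + μ) * s))
  have hG : HasDerivAt G (d * μ) 0 := by
    have hcomp (k : ℝ) : HasDerivAt (fun s => F (-(k * s))) (d * -k) 0 := by
      have hlin : HasDerivAt (fun s : ℝ => -(k * s)) (-k) 0 := by
        simpa [neg_mul] using (hasDerivAt_id' (0 : ℝ)).const_mul (-k)
      exact hF.comp_of_eq 0 hlin (by simp)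
    have := (hcomp lam).sub (hcomp (lam + μ))
    rwa [show d * -lam - d * -(lam + μ) = d * μ by ring] at this
  have hexp : HasDerivAt (fun t => Real.exp (-(a * t))) (-a) 0 := by
    simpa using ((hasDerivAt_id (0 : ℝ)).const_mul a).neg.exp
  have hpow := tendsto_rpow_nhdsGT_zero_s14 hν₀
  have hF₀ : Tendsto (fun t : ℝ => F (-(lam * t ^ ν))) (𝓝[>] 0) (𝓝 (F 0)) := by
    refine hF.continuousAt.tendsto.comp ?_
    simpa using ((hpow.mono_right nhdsWithin_le_nhds).const_mul lam).neg
  have hlim₁ : Tendsto (fun t : ℝ => (t ^ ν)⁻¹ * G (t ^ ν)) (𝓝[>] 0) (𝓝 (d * μ)) := by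
    have hG₀ : G 0 = 0 := by simp [G]
    simpa [hG₀, Function.comp_def] using hG.tendsto_slope_zero_right.comp hpow
  have hlim₂ : Tendsto (fun t : ℝ => -(t⁻¹ * (Real.exp (-(a * t)) - 1)) * t ^ (1 - ν) *
      F (-(lam * t ^ ν))) (𝓝[>] 0) (𝓝 0) := by
    simpa using ((hexp.tendsto_slope_zero_right.neg.mul
      ((tendsto_rpow_nhdsGT_zero_s14 (sub_pos.2 hν₁)).mono_right nhdsWithin_le_nhds)).mul hF₀)
  refine tendsto_nhds_unique (hlim₁.congr' ?_) hlim₂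
  filter_upwards [self_mem_nhdsWithin] with t (ht : 0 < t)
  have hs : 0 < t ^ ν := Real.rpow_pos_of_pos ht ν
  simp only [G, ← h t ht, Real.rpow_sub ht, Real.rpow_one]
  field_simp
  ring

theorem mittagLeffler_tilting_iff_general (ν h lam c : ℝ) (hν : ν ∈ Set.Ioo (0 : ℝ) 1)
    (hh : 0 < h) (hc : 0 < c) (θ : ℝ) (hθ : 0 ≤ θ) :
    ((∀ t : ℝ, 0 < t →
        Real.exp (-(c * θ * t)) * genML ν (ν * h) h (-(lam * t ^ ν))
          = genML ν (ν * h) h (-((lam + (c * θ) ^ ν) * t ^ ν))) ↔ θ = 0) ∧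
    (∀ θ' : ℝ, 0 ≤ θ' → ∀ t : ℝ, 0 < t →
      Real.exp (-(c * θ' * t)) * genML 1 h h (-(lam * t))
        = genML 1 h h (-((lam + c * θ') * t))) := by
  obtain ⟨hν₀, hν₁⟩ := hν
  refine ⟨⟨fun hid => ?_, ?_⟩, fun θ' _ t _ => ?_⟩
  · by_contra hθ₀
    have hβ : 0 < ν * h := mul_pos hν₀ hh
    have hμ : 0 < (c * θ) ^ ν := Real.rpow_pos_of_pos (mul_pos hc (hθ.lt_of_ne' hθ₀)) ν
    exact (mul_pos (genMLCoeff_pos hν₀.le hβ hh 1) hμ).ne'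
      (mul_eq_zero_of_exp_mul_comp_rpow_eq (hasDerivAt_genML_zero hν₀.le hβ h) hν₀ hν₁ hid)
  · rintro rfl t -
    simp [Real.zero_rpow hν₀.ne']
  · rw [genML_one_self hh, genML_one_self hh, ← mul_div_assoc, ← Real.exp_add]
    ring_nf

/-- The exponential-tilting identity for the generalized Mittag-Leffler function holds for all
`t > 0` iff `θ = 0` when `ν ∈ (0,1)`, whereas it always holds when `ν = 1`. -/
theorem mittagLeffler_tilting_iff (ν h lam c : ℝ) (hν : ν ∈ Set.Ioo (0 : ℝ) 1)
    (hh : 0 < h) (hlam : 0 < lam) (hc : 0 < c) (θ : ℝ) (hθ : 0 ≤ θ) :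
    ((∀ t : ℝ, 0 < t →
        Real.exp (-(c * θ * t)) * genML ν (ν * h) h (-(lam * t ^ ν))
          = genML ν (ν * h) h (-((lam + (c * θ) ^ ν) * t ^ ν))) ↔ θ = 0) ∧
    (∀ θ' : ℝ, 0 ≤ θ' → ∀ t : ℝ, 0 < t →
      Real.exp (-(c * θ' * t)) * genML 1 h h (-(lam * t))
        = genML 1 h h (-((lam + c * θ') * t))) :=
  mittagLeffler_tilting_iff_general ν h lam c hν hh hc θ hθ
end
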